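/- arXiv:math/9610206 — 9 statements merged into one kernel-verified Lean document; each statement's English description precedes it below -/
import Mathlib

section
/- Let X be an infinite compact Hausdorff space. Then the density of the Banach space C(X, ℝ) of continuous real-valued functions on X (with the supremum norm) equals the topological weight of X: d(C(X)) = w(X). -/
universe u

/-- The topological weight of a space: the least cardinality of a base for its topology. -/
noncomputable def topWeight (X : Type u) [TopologicalSpace X] : Cardinal.{u} :=
  sInf {c | ∃ B : Set (Set X), TopologicalSpace.IsTopologicalBasis B ∧ Cardinal.mk B = c}

/-- The density of a space: the least cardinality of a dense subset. -/
noncomputable def topDensity (X : Type u) [TopologicalSpace X] : Cardinal.{u} :=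
  sInf {c | ∃ s : Set X, Dense s ∧ Cardinal.mk s = c}

open Cardinal Set TopologicalSpace

/-- weight ≤ density of `C(X,ℝ)`. -/
lemma topWeight_le_topDensity_continuousMap {X : Type u} [TopologicalSpace X]
    [CompactSpace X] [T2Space X] :
    topWeight X ≤ topDensity C(X, ℝ) := by
  have hne : {c | ∃ s : Set C(X, ℝ), Dense s ∧ Cardinal.mk s = c}.Nonempty :=
    ⟨_, Set.univ, dense_univ, rfl⟩
  obtain ⟨D, hD, hDc⟩ := csInf_mem hne
  set B : Set (Set X) := (fun f : C(X, ℝ) => f ⁻¹' Set.Ioo (3/4 : ℝ) 2) '' D with hBdef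
  have hbasis : IsTopologicalBasis B := by
    apply isTopologicalBasis_of_isOpen_of_nhds
    · rintro u ⟨f, -, rfl⟩
      exact isOpen_Ioo.preimage f.continuous
    · intro a u hau hu
      obtain ⟨g, hg0, hg1, hg01⟩ := exists_continuous_zero_one_of_isClosed
        (isClosed_compl_iff.mpr hu) isClosed_singleton
        (Set.disjoint_singleton_right.mpr (by simpa using hau))
      obtain ⟨f, hfb, hfD⟩ := Metric.dense_iff.mp hD g (1/4) (by norm_num)
      have hdist : dist f g < 1/4 := by simpa [Metric.mem_ball] using hfb
      have key : ∀ x : X, dist (f x) (g x) < 1/4 :=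
        fun x => lt_of_le_of_lt (ContinuousMap.dist_apply_le_dist x) hdist
      refine ⟨f ⁻¹' Set.Ioo (3/4 : ℝ) 2, ⟨f, hfD, rfl⟩, ?_, ?_⟩
      · have h1 : g a = 1 := hg1 rfl
        have := key a
        rw [Real.dist_eq] at this
        constructor <;> [skip; skip] <;> rw [h1] at this <;>
          cases' abs_lt.mp this with h' h'' <;> linarith
      · intro y hy
        by_contra hyu
        have h0 : g y = 0 := hg0 hyu
        have := key y
        rw [Real.dist_eq, h0] at this
        have : f y < 1/4 := by cases' abs_lt.mp this with h' h''; linarith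
        exact absurd hy.1 (by linarith)
  calc topWeight X ≤ Cardinal.mk B :=
        csInf_le (OrderBot.bddBelow _) ⟨B, hbasis, rfl⟩
    _ ≤ Cardinal.mk D := Cardinal.mk_image_le
    _ = topDensity C(X, ℝ) := hDc

lemma topDensity_continuousMap_le_mk_basis {X : Type u} [TopologicalSpace X]
    [CompactSpace X] [T2Space X] [Infinite X]
    {B : Set (Set X)} (hB : IsTopologicalBasis B) :
    topDensity C(X, ℝ) ≤ Cardinal.mk B := by
  classical
  -- B is infinite
  have hBinf : ℵ₀ ≤ Cardinal.mk B := by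
    by_contra h
    push_neg at h
    have hinj : Function.Injective (fun x : X => {U : B | x ∈ (U : Set X)}) := by
      intro x y hxy
      by_contra hne'
      obtain ⟨u, v, hu, hv, hxu, hyv, huv⟩ := t2_separation hne'
      obtain ⟨U, hUB, hxU, hUu⟩ := hB.exists_subset_of_mem_open hxu hu
      simp only [Set.ext_iff, Set.mem_setOf_eq] at hxy
      exact huv.le_bot ⟨hUu ((hxy ⟨U, hUB⟩).mp hxU), hyv⟩
    have h1 : Cardinal.mk X ≤ 2 ^ Cardinal.mk B :=
      (Cardinal.mk_le_of_injective hinj).trans_eq (Cardinal.mk_set)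
    have h2 : (2 : Cardinal) ^ Cardinal.mk B < ℵ₀ :=
      Cardinal.power_lt_aleph0 (Cardinal.nat_lt_aleph0 2) h
    exact (Cardinal.infinite_iff.mp ‹Infinite X›).not_gt (h1.trans_lt h2)
  -- Urysohn functions for pairs of basis elements with disjoint closures
  let P : Set (B × B) := {p | Disjoint (closure (p.1 : Set X)) (closure (p.2 : Set X))}
  have hex : ∀ p : P, ∃ f : C(X, ℝ),
      Set.EqOn f 0 (closure ((p : B × B).1 : Set X)) ∧
      Set.EqOn f 1 (closure ((p : B × B).2 : Set X)) := by
    rintro ⟨p, hp⟩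
    obtain ⟨f, h0, h1, -⟩ := exists_continuous_zero_one_of_isClosed
      isClosed_closure isClosed_closure hp
    exact ⟨f, h0, h1⟩
  choose F hF0 hF1 using hex
  let S : Set C(X, ℝ) := Set.range F
  have hSsep : ∀ ⦃x y : X⦄, x ≠ y → ∃ f ∈ S, f x ≠ f y := by
    intro x y hxy
    obtain ⟨u, v, hu, hv, hxu, hyv, huv⟩ := t2_separation hxy
    obtain ⟨tu, htu, htuC, htuS⟩ := exists_mem_nhds_isClosed_subset (hu.mem_nhds hxu)
    obtain ⟨tv, htv, htvC, htvS⟩ := exists_mem_nhds_isClosed_subset (hv.mem_nhds hyv)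
    obtain ⟨U, hUB, hxU, hUu⟩ := hB.exists_subset_of_mem_open (mem_interior_iff_mem_nhds.mpr htu)
      isOpen_interior
    obtain ⟨V, hVB, hyV, hVv⟩ := hB.exists_subset_of_mem_open (mem_interior_iff_mem_nhds.mpr htv)
      isOpen_interior
    have hUc : closure U ⊆ u :=
      (closure_minimal (hUu.trans interior_subset) htuC).trans htuS
    have hVc : closure V ⊆ v :=
      (closure_minimal (hVv.trans interior_subset) htvC).trans htvS
    have hp : ((⟨U, hUB⟩, ⟨V, hVB⟩) : B × B) ∈ P := huv.mono hUc hVc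
    refine ⟨F ⟨_, hp⟩, Set.mem_range_self _, ?_⟩
    have h0 : F ⟨_, hp⟩ x = 0 := hF0 ⟨_, hp⟩ (subset_closure hxU)
    have h1 : F ⟨_, hp⟩ y = 1 := hF1 ⟨_, hp⟩ (subset_closure hyV)
    rw [h0, h1]; norm_num
  -- the rational constants
  let Q : Set C(X, ℝ) := Set.range (fun q : ℚ => algebraMap ℝ C(X, ℝ) (q : ℝ))
  let T : Set C(X, ℝ) := S ∪ Q
  let Aq : Subalgebra ℤ C(X, ℝ) := Algebra.adjoin ℤ T
  -- the topological closure of Aq, as a subring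
  let Rc : Subring C(X, ℝ) := Aq.toSubring.topologicalClosure
  have hconst : ∀ r : ℝ, algebraMap ℝ C(X, ℝ) r ∈ Rc := by
    intro r
    have hcont : Continuous (fun t : ℝ => algebraMap ℝ C(X, ℝ) t) := by
      simp only [Algebra.algebraMap_eq_smul_one]
      exact continuous_id.smul continuous_const
    have hclosed : IsClosed ((fun t : ℝ => algebraMap ℝ C(X, ℝ) t) ⁻¹' (Rc : Set C(X, ℝ))) :=
      (Subring.isClosed_topologicalClosure _).preimage hcont
    have hsub : Set.range ((↑) : ℚ → ℝ) ⊆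
        (fun t : ℝ => algebraMap ℝ C(X, ℝ) t) ⁻¹' (Rc : Set C(X, ℝ)) := by
      rintro _ ⟨q, rfl⟩
      have : algebraMap ℝ C(X, ℝ) (q : ℝ) ∈ T := Or.inr ⟨q, rfl⟩
      exact Subring.le_topologicalClosure _ (Algebra.subset_adjoin this)
    have hdense : Dense (Set.range ((↑) : ℚ → ℝ)) := Rat.denseRange_cast
    have : closure (Set.range ((↑) : ℚ → ℝ)) ⊆ _ := closure_minimal hsub hclosed
    exact this (by rw [hdense.closure_eq]; trivial)
  let Ar : Subalgebra ℝ C(X, ℝ) :=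
    { Rc.toSubsemiring with algebraMap_mem' := hconst }
  have hArsep : Ar.SeparatesPoints := by
    intro x y hxy
    obtain ⟨f, hfS, hfxy⟩ := hSsep hxy
    exact ⟨f, ⟨f, Subring.le_topologicalClosure _ (Algebra.subset_adjoin (Or.inl hfS)), rfl⟩, hfxy⟩
  have hSW := ContinuousMap.subalgebra_topologicalClosure_eq_top_of_separatesPoints Ar hArsep
  have hArclosed : IsClosed (Ar : Set C(X, ℝ)) := Subring.isClosed_topologicalClosure _
  have hAqdense : Dense (Aq : Set C(X, ℝ)) := by
    have h1 : (Ar.topologicalClosure : Set C(X, ℝ)) = Set.univ := by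
      rw [hSW]; rfl
    have h2 : (Ar.topologicalClosure : Set C(X, ℝ)) = closure (Ar : Set C(X, ℝ)) := rfl
    have h3 : (Ar : Set C(X, ℝ)) = closure (Aq : Set C(X, ℝ)) := rfl
    rw [dense_iff_closure_eq]
    rw [h2, h3, closure_closure] at h1
    exact h1
  -- cardinality bound
  have hT : Cardinal.mk T ≤ Cardinal.mk B := by
    have hS : Cardinal.mk S ≤ Cardinal.mk B := by
      calc Cardinal.mk S ≤ Cardinal.mk P := Cardinal.mk_range_le
        _ ≤ Cardinal.mk (B × B) := Cardinal.mk_subtype_le _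
        _ = Cardinal.mk B * Cardinal.mk B := by simp [Cardinal.mk_prod]
        _ = Cardinal.mk B := Cardinal.mul_eq_self hBinf
    have hQ : Cardinal.mk Q ≤ ℵ₀ := (Set.countable_range _).le_aleph0
    calc Cardinal.mk T ≤ Cardinal.mk S + Cardinal.mk Q := Cardinal.mk_union_le _ _
      _ ≤ Cardinal.mk B + ℵ₀ := add_le_add hS hQ
      _ = Cardinal.mk B := by
          rw [Cardinal.add_eq_max hBinf, max_eq_left hBinf]
  have hAq : Cardinal.mk Aq ≤ Cardinal.mk B := by
    have h1 : (Aq : Set C(X, ℝ)) = Set.range ⇑(MvPolynomial.aeval (R := ℤ) ((↑) : T → C(X, ℝ))) := by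
      rw [show Aq = Algebra.adjoin ℤ T from rfl, Algebra.adjoin_eq_range ℤ T]
      rfl
    calc Cardinal.mk Aq = Cardinal.mk (Set.range ⇑(MvPolynomial.aeval (R := ℤ) ((↑) : T → C(X, ℝ)))) := by
          rw [← h1]; rfl
      _ ≤ Cardinal.mk (MvPolynomial T ℤ) := Cardinal.mk_range_le
      _ ≤ Cardinal.mk B := by
          have h2 := MvPolynomial.cardinalMk_le_max_lift (σ := ↥T) (R := ℤ)
          simp only [Cardinal.mk_int, Cardinal.lift_aleph0, Cardinal.lift_id, Cardinal.lift_uzero] at h2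
          exact h2.trans (max_le (max_le hBinf hT) hBinf)
  calc topDensity C(X, ℝ) ≤ Cardinal.mk (Aq : Set C(X, ℝ)) :=
        csInf_le (OrderBot.bddBelow _) ⟨(Aq : Set C(X, ℝ)), hAqdense, rfl⟩
    _ ≤ Cardinal.mk B := hAq

/-- For an infinite compact Hausdorff space `X`, the density of the Banach space `C(X, ℝ)`
(with the supremum-norm topology) equals the topological weight of `X`. -/
theorem density_continuousMap_eq_weight {X : Type u} [TopologicalSpace X]
    [CompactSpace X] [T2Space X] [Infinite X] :
    topDensity C(X, ℝ) = topWeight X := by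
  refine le_antisymm ?_ topWeight_le_topDensity_continuousMap
  have hne : {c | ∃ B : Set (Set X), TopologicalSpace.IsTopologicalBasis B ∧
      Cardinal.mk B = c}.Nonempty := ⟨_, _, isTopologicalBasis_opens, rfl⟩
  obtain ⟨B, hB, hBc⟩ := csInf_mem hne
  calc topDensity C(X, ℝ) ≤ Cardinal.mk B := topDensity_continuousMap_le_mk_basis hB
    _ = topWeight X := hBc
end

section
/- Let X be an infinite compact Hausdorff space. Then there exists a family Φ of continuous functions from X into the closed unit interval [0,1] such that the cardinality of Φ equals the weight of X, and for any two distinct φ, ψ ∈ Φ one has sup_{x ∈ X} |φ(x) − ψ(x)| ≥ 1/2. -/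
universe u

open TopologicalSpace Set Cardinal


lemma topWeight_exists_basis (X : Type u) [TopologicalSpace X] :
    ∃ B : Set (Set X), IsTopologicalBasis B ∧ #B = topWeight X := by
  have h : topWeight X ∈ {c | ∃ B : Set (Set X), IsTopologicalBasis B ∧ #B = c} :=
    csInf_mem ⟨_, {U : Set X | IsOpen U}, isTopologicalBasis_opens, rfl⟩
  exact h

lemma topWeight_le {X : Type u} [TopologicalSpace X] {B : Set (Set X)}
    (hB : IsTopologicalBasis B) : topWeight X ≤ #B :=
  csInf_le (OrderBot.bddBelow _) ⟨B, hB, rfl⟩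

lemma aleph0_le_topWeight (X : Type u) [TopologicalSpace X] [T1Space X] [Infinite X] :
    ℵ₀ ≤ topWeight X := by
  by_contra h
  push_neg at h
  obtain ⟨B, hB, hBcard⟩ := topWeight_exists_basis X
  have hBfin : Finite ↥B := by
    rw [← Cardinal.lt_aleph0_iff_finite, hBcard]; exact h
  have hinj : Function.Injective (fun x : X => {U : ↥B | x ∈ (U : Set X)}) := by
    intro x y hxy
    by_contra hne
    obtain ⟨U, hUB, hxU, hUsub⟩ := hB.exists_subset_of_mem_open
      (show x ∈ ({y}ᶜ : Set X) from hne) (isClosed_singleton.isOpen_compl)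
    have h1 : (⟨U, hUB⟩ : ↥B) ∈ {U : ↥B | x ∈ (U : Set X)} := hxU
    simp only [] at hxy
    rw [show {U : ↥B | x ∈ (U : Set X)} = {U : ↥B | y ∈ (U : Set X)} from hxy] at h1
    exact hUsub h1 rfl
  have : Finite X := Finite.of_injective _ hinj
  exact absurd this (by simpa using (Infinite.not_finite : ¬ Finite X))

/-- In an infinite compact Hausdorff space `X` there is a family `Φ` of continuous
functions into `[0,1]`, of cardinality `w(X)`, any two distinct members of which are
at sup-distance at least `1/2`. -/
theorem exists_separated_family {X : Type u} [TopologicalSpace X]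
    [CompactSpace X] [T2Space X] [Infinite X] :
    ∃ Φ : Set C(X, ℝ),
      (∀ φ ∈ Φ, ∀ x : X, φ x ∈ Set.Icc (0 : ℝ) 1) ∧
      Cardinal.mk Φ = topWeight X ∧
      ∀ φ ∈ Φ, ∀ ψ ∈ Φ, φ ≠ ψ → (1 / 2 : ℝ) ≤ ‖φ - ψ‖ := by
  classical
  -- the collection of "good" separated families of [0,1]-valued functions
  set G : Set (Set C(X, ℝ)) :=
    {Φ | (∀ φ ∈ Φ, ∀ x : X, φ x ∈ Set.Icc (0 : ℝ) 1) ∧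
      ∀ φ ∈ Φ, ∀ ψ ∈ Φ, φ ≠ ψ → (1 / 2 : ℝ) ≤ ‖φ - ψ‖} with hG
  obtain ⟨Φ, hΦmem, hΦmax⟩ : ∃ Φ, Φ ∈ G ∧ ∀ Ψ ∈ G, Φ ⊆ Ψ → Ψ ⊆ Φ := by
    have hchains : ∀ c ⊆ G, IsChain (· ⊆ ·) c → ∃ ub ∈ G, ∀ s ∈ c, s ⊆ ub := by
      intro c hc hchain
      refine ⟨⋃₀ c, ⟨?_, ?_⟩, fun s hs => subset_sUnion_of_mem hs⟩
      · rintro φ ⟨s, hs, hφ⟩ x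
        exact (hc hs).1 φ hφ x
      · rintro φ ⟨s, hs, hφ⟩ ψ ⟨t, ht, hψ⟩ hne
        rcases hchain.total hs ht with h | h
        · exact (hc ht).2 φ (h hφ) ψ hψ hne
        · exact (hc hs).2 φ hφ ψ (h hψ) hne
    obtain ⟨Φ, h1, h2⟩ := zorn_subset G hchains
    exact ⟨Φ, h1, fun Ψ hΨ hsub => h2 hΨ hsub⟩
  obtain ⟨hΦicc, hΦsep⟩ := hΦmem
  -- maximality: Φ is a (1/2)-net
  have hnet : ∀ f : C(X, ℝ), (∀ x, f x ∈ Set.Icc (0:ℝ) 1) → ∃ φ ∈ Φ, ‖f - φ‖ < 1/2 := by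
    intro f hf
    by_cases hfΦ : f ∈ Φ
    · exact ⟨f, hfΦ, by simp⟩
    by_contra hcon
    push_neg at hcon
    have hgood : insert f Φ ∈ G := by
      constructor
      · intro φ hφ x
        rcases hφ with rfl | hφ
        · exact hf x
        · exact hΦicc φ hφ x
      · intro φ hφ ψ hψ hne
        rcases hφ with rfl | hφ
        · rcases hψ with rfl | hψ
          · exact absurd rfl hne
          · exact hcon ψ hψ
        · rcases hψ with rfl | hψ
          · rw [norm_sub_rev]; exact hcon φ hφ
          · exact hΦsep φ hφ ψ hψ hne
    exact hfΦ (hΦmax _ hgood (subset_insert _ _) (mem_insert f Φ))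
  -- Φ separates points, quantitatively
  have hsep : ∀ x y : X, x ≠ y → ∃ φ ∈ Φ, φ x < 1/2 ∧ 1/2 < φ y := by
    intro x y hxy
    obtain ⟨f, hf0, hf1, hf01⟩ := exists_continuous_zero_one_of_isClosed
      (isClosed_singleton (x := x)) (isClosed_singleton (x := y))
      (disjoint_singleton.2 hxy)
    obtain ⟨φ, hφ, hd⟩ := hnet f hf01
    have hx0 : f x = 0 := hf0 rfl
    have hy1 : f y = 1 := hf1 rfl
    have hbx : ‖(f - φ) x‖ ≤ ‖f - φ‖ := (f - φ).norm_coe_le_norm x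
    have hby : ‖(f - φ) y‖ ≤ ‖f - φ‖ := (f - φ).norm_coe_le_norm y
    simp only [ContinuousMap.sub_apply, Real.norm_eq_abs] at hbx hby
    rw [hx0] at hbx; rw [hy1] at hby
    rw [abs_le'] at hbx hby
    exact ⟨φ, hφ, by linarith [hbx.2], by linarith [hby.1]⟩
  -- Φ is infinite
  have hΦinf : Infinite ↥Φ := by
    rw [Set.infinite_coe_iff]
    intro hfin
    haveI := hfin.fintype
    set n := Fintype.card ↥Φ with hn
    set e := Infinite.natEmbedding X with he
    have hfuns : ∀ i : Fin (n+1), ∃ f : C(X,ℝ), f (e i) = 1 ∧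
        (∀ j : Fin (n+1), j ≠ i → f (e j) = 0) ∧ ∀ x, f x ∈ Set.Icc (0:ℝ) 1 := by
      intro i
      have hAfin : (Set.Finite ((fun j : Fin (n+1) => e j) '' {j | j ≠ i})) :=
        (Set.toFinite _).image _
      have hdisj : Disjoint ((fun j : Fin (n+1) => e j) '' {j | j ≠ i}) {e i} := by
        rw [Set.disjoint_singleton_right]
        rintro ⟨j, hj, hje⟩
        exact hj (Fin.val_injective (e.injective hje))
      obtain ⟨f, hf0, hf1, hf01⟩ := exists_continuous_zero_one_of_isClosed
        hAfin.isClosed (isClosed_singleton (x := e i)) hdisj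
      exact ⟨f, hf1 rfl, fun j hj => hf0 ⟨j, hj, rfl⟩, hf01⟩
    choose f hf1 hf0 hf01 using hfuns
    have hφi : ∀ i : Fin (n+1), ∃ φ : ↥Φ, ‖f i - (φ : C(X,ℝ))‖ < 1/2 := by
      intro i
      obtain ⟨φ, hφ, hd⟩ := hnet (f i) (hf01 i)
      exact ⟨⟨φ, hφ⟩, hd⟩
    choose φi hφi using hφi
    obtain ⟨i, j, hij, hijeq⟩ := Fintype.exists_ne_map_eq_of_card_lt φi (by simp [hn])
    have hfar : (1:ℝ) ≤ ‖f i - f j‖ := by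
      have := (f i - f j).norm_coe_le_norm (e i)
      simp only [ContinuousMap.sub_apply, Real.norm_eq_abs] at this
      rw [hf1 i, hf0 j i hij] at this
      simpa using this
    have hclose : ‖f i - f j‖ < 1 := by
      have h1 := hφi i
      have h2 := hφi j
      rw [hijeq] at h1
      calc ‖f i - f j‖ = ‖(f i - (φi j : C(X,ℝ))) + ((φi j : C(X,ℝ)) - f j)‖ := by ring_nf
        _ ≤ ‖f i - (φi j : C(X,ℝ))‖ + ‖(φi j : C(X,ℝ)) - f j‖ := norm_add_le _ _
        _ < 1 := by rw [norm_sub_rev (φi j : C(X,ℝ))]; linarith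
    linarith
  -- upper bound : #Φ ≤ topWeight X
  obtain ⟨B, hB, hBcard⟩ := topWeight_exists_basis X
  have hκinf : ℵ₀ ≤ topWeight X := aleph0_le_topWeight X
  have hBinf : Infinite ↥B := by
    have h : ℵ₀ ≤ #↥B := hBcard ▸ hκinf
    exact Cardinal.infinite_iff.mpr h
  have hupper : #↥Φ ≤ topWeight X := by
    set V : Fin 9 → Set ℝ := fun k => Set.Ioo ((k:ℝ)/8 - 1/8) ((k:ℝ)/8 + 1/8) with hV
    have hVcov : ∀ t : ℝ, t ∈ Set.Icc (0:ℝ) 1 → ∃ k : Fin 9, t ∈ V k := by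
      intro t ht
      have h8 : (0:ℝ) ≤ t * 8 := by linarith [ht.1]
      have hfl : (0:ℤ) ≤ ⌊t * 8⌋ := Int.floor_nonneg.2 h8
      have hle : ⌊t * 8⌋ ≤ 8 := by
        have h := Int.floor_le_floor (R := ℝ) (show t * 8 ≤ (8:ℝ) by linarith [ht.2])
        simpa using h
      refine ⟨⟨⌊t * 8⌋.toNat, by omega⟩, ?_, ?_⟩
      · have h1 : (⌊t * 8⌋ : ℝ) ≤ t * 8 := Int.floor_le _
        have h2 : ((⌊t * 8⌋.toNat : ℤ) : ℝ) = (⌊t * 8⌋ : ℝ) := by exact_mod_cast Int.toNat_of_nonneg hfl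
        simp only [Fin.val_mk]
        push_cast [← h2] at h1 ⊢
        linarith
      · have h1 : t * 8 < (⌊t * 8⌋ : ℝ) + 1 := Int.lt_floor_add_one _
        have h2 : ((⌊t * 8⌋.toNat : ℤ) : ℝ) = (⌊t * 8⌋ : ℝ) := by exact_mod_cast Int.toNat_of_nonneg hfl
        simp only [Fin.val_mk]
        push_cast [← h2] at h1 ⊢
        linarith
    have hcode : ∀ φ : C(X,ℝ), φ ∈ Φ → ∃ t : Finset (↥B × Fin 9),
        (∀ i ∈ t, (i.1 : Set X) ⊆ φ ⁻¹' V i.2) ∧ ∀ x : X, ∃ i ∈ t, x ∈ (i.1 : Set X) := by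
      intro φ hφ
      set W : ↥B × Fin 9 → Set X := fun i =>
        if (i.1 : Set X) ⊆ φ ⁻¹' V i.2 then (i.1 : Set X) else ∅ with hW
      have hWopen : ∀ i, IsOpen (W i) := by
        intro i
        simp only [hW]
        split
        · exact hB.isOpen i.1.2
        · exact isOpen_empty
      have hWcov : (Set.univ : Set X) ⊆ ⋃ i, W i := by
        intro x _
        obtain ⟨k, hk⟩ := hVcov (φ x) (hΦicc φ hφ x)
        have hxo : x ∈ φ ⁻¹' V k := hk
        obtain ⟨U, hUB, hxU, hUsub⟩ := hB.exists_subset_of_mem_open hxo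
          (isOpen_Ioo.preimage φ.continuous)
        refine Set.mem_iUnion.2 ⟨(⟨U, hUB⟩, k), ?_⟩
        simp only [hW, if_pos hUsub]
        exact hxU
      obtain ⟨t, ht⟩ := isCompact_univ.elim_finite_subcover W hWopen hWcov
      refine ⟨t.filter (fun i => (i.1 : Set X) ⊆ φ ⁻¹' V i.2), ?_, ?_⟩
      · intro i hi
        exact (Finset.mem_filter.1 hi).2
      · intro x
        obtain ⟨i, hit, hxi⟩ := Set.mem_iUnion₂.1 (ht (Set.mem_univ x))
        simp only [hW] at hxi
        by_cases hsub : (i.1 : Set X) ⊆ φ ⁻¹' V i.2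
        · rw [if_pos hsub] at hxi
          exact ⟨i, Finset.mem_filter.2 ⟨hit, hsub⟩, hxi⟩
        · rw [if_neg hsub] at hxi
          exact absurd hxi (Set.notMem_empty x)
    choose code hcode1 hcode2 using fun φ : ↥Φ => hcode φ φ.2
    have hinj : Function.Injective code := by
      intro φ ψ heq
      have hnorm : ‖(φ:C(X,ℝ)) - ψ‖ ≤ 1/4 := by
        rw [ContinuousMap.norm_le _ (by norm_num)]
        intro x
        obtain ⟨i, hit, hxi⟩ := hcode2 φ x
        have hψV : (ψ : C(X,ℝ)) x ∈ V i.2 := by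
          have hit' : i ∈ code ψ := heq ▸ hit
          exact hcode1 ψ i hit' hxi
        have hφV : (φ : C(X,ℝ)) x ∈ V i.2 := hcode1 φ i hit hxi
        rw [hV] at hφV hψV
        obtain ⟨ha1, ha2⟩ := hφV
        obtain ⟨hb1, hb2⟩ := hψV
        simp only [ContinuousMap.sub_apply, Real.norm_eq_abs]
        rw [abs_le]
        constructor <;> linarith
      by_contra hne
      have hvalne : (φ : C(X,ℝ)) ≠ ψ := fun h => hne (Subtype.ext h)
      have := hΦsep φ φ.2 ψ ψ.2 hvalne
      linarith
    calc #↥Φ ≤ #(Finset (↥B × Fin 9)) := Cardinal.mk_le_of_injective hinj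
      _ = #(↥B × Fin 9) := by
          haveI : Infinite (↥B × Fin 9) := Prod.infinite_of_left
          exact Cardinal.mk_finset_of_infinite _
      _ ≤ topWeight X := by
          have hBa : ℵ₀ ≤ #↥B := hBcard ▸ hκinf
          have h9 : #(↥B × Fin 9) = #↥B * 9 := by
            simp [Cardinal.mk_prod]
          rw [h9, Cardinal.mul_eq_left hBa (le_trans ((Cardinal.nat_lt_aleph0 9).le.trans hBa) le_rfl |> fun h => by exact_mod_cast h) (by norm_num), hBcard]
  -- lower bound : topWeight X ≤ #Φ
  have hlower : topWeight X ≤ #↥Φ := by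
    set pre : ↥Φ × ℚ × ℚ → Set X :=
      fun p => (p.1 : C(X,ℝ)) ⁻¹' Set.Ioo ((p.2.1 : ℝ)) ((p.2.2 : ℝ)) with hpre
    set S : Set (Set X) := Set.range pre with hS
    have hSopen : ∀ s ∈ S, IsOpen s := by
      rintro s ⟨p, rfl⟩
      exact isOpen_Ioo.preimage (p.1 : C(X,ℝ)).continuous
    have h1 : ‹TopologicalSpace X› ≤ TopologicalSpace.generateFrom S :=
      le_generateFrom hSopen
    have ht2 : @T2Space X (TopologicalSpace.generateFrom S) := by
      refine @T2Space.mk X (TopologicalSpace.generateFrom S) (fun x y hxy => ?_)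
      obtain ⟨φ, hφ, hx, hy⟩ := hsep x y hxy
      refine ⟨pre (⟨φ, hφ⟩, -1, 1/2), pre (⟨φ, hφ⟩, 1/2, 2), ?_, ?_, ?_, ?_, ?_⟩
      · exact TopologicalSpace.isOpen_generateFrom_of_mem ⟨_, rfl⟩
      · exact TopologicalSpace.isOpen_generateFrom_of_mem ⟨_, rfl⟩
      · show (φ : C(X,ℝ)) x ∈ Set.Ioo (((-1 : ℚ) : ℝ)) (((1/2 : ℚ) : ℝ))
        rw [Set.mem_Ioo]
        push_cast
        exact ⟨by linarith [(hΦicc φ hφ x).1], by linarith⟩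
      · show (φ : C(X,ℝ)) y ∈ Set.Ioo (((1/2 : ℚ) : ℝ)) (((2 : ℚ) : ℝ))
        rw [Set.mem_Ioo]
        push_cast
        exact ⟨by linarith, by linarith [(hΦicc φ hφ y).2]⟩
      · rw [Set.disjoint_left]
        rintro z hz1 hz2
        have hz1' : (φ : C(X,ℝ)) z < ((1/2 : ℚ) : ℝ) := hz1.2
        have hz2' : ((1/2 : ℚ) : ℝ) < (φ : C(X,ℝ)) z := hz2.1
        linarith
    have h2 : TopologicalSpace.generateFrom S ≤ ‹TopologicalSpace X› := by
      rw [TopologicalSpace.le_def]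
      intro U hU
      have hC : IsCompact Uᶜ := hU.isClosed_compl.isCompact
      have hcont : @Continuous X X ‹TopologicalSpace X› (TopologicalSpace.generateFrom S) id :=
        continuous_id_iff_le.2 h1
      have hC' : @IsCompact X (TopologicalSpace.generateFrom S) Uᶜ := by
        have := @IsCompact.image X X ‹TopologicalSpace X› (TopologicalSpace.generateFrom S)
          Uᶜ id hC hcont
        rwa [Set.image_id] at this
      have hclosed := @IsCompact.isClosed X (TopologicalSpace.generateFrom S) ht2 _ hC'
      have hopen := (@isOpen_compl_iff X Uᶜ (TopologicalSpace.generateFrom S)).2 hclosed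
      rwa [compl_compl] at hopen
    have hgen : ‹TopologicalSpace X› = TopologicalSpace.generateFrom S := le_antisymm h1 h2
    have hbasis0 := TopologicalSpace.isTopologicalBasis_of_subbasis hgen
    set g : Finset (↥Φ × ℚ × ℚ) → Set X := fun F => ⋂ p ∈ F, pre p with hg
    have hbasis : IsTopologicalBasis (Set.range g) := by
      apply isTopologicalBasis_of_isOpen_of_nhds
      · rintro s ⟨F, rfl⟩
        exact isOpen_biInter_finset fun p _ => hSopen _ ⟨p, rfl⟩
      · intro x U hx hU
        obtain ⟨s, hs, hxs, hsU⟩ := hbasis0.exists_subset_of_mem_open hx hU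
        obtain ⟨f, ⟨hffin, hfS⟩, rfl⟩ := hs
        haveI := hffin.fintype
        choose pf hpf using fun s : ↥f => (hfS s.2 : (s : Set X) ∈ S)
        set F : Finset (↥Φ × ℚ × ℚ) := Finset.univ.image pf with hF
        have hgF : g F = ⋂₀ f := by
          apply Set.Subset.antisymm
          · intro z hz
            rw [Set.mem_sInter]
            intro s hs
            have hmem : pf ⟨s, hs⟩ ∈ F := Finset.mem_image_of_mem pf (Finset.mem_univ _)
            have hz' := Set.mem_iInter₂.1 hz _ hmem
            rwa [hpf ⟨s, hs⟩] at hz'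
          · intro z hz
            apply Set.mem_iInter₂.2
            intro p hp
            obtain ⟨s, _, rfl⟩ := Finset.mem_image.1 hp
            rw [hpf s]
            exact Set.mem_sInter.1 hz _ s.2
        exact ⟨g F, ⟨F, rfl⟩, hgF ▸ hxs, hgF ▸ hsU⟩
    calc topWeight X ≤ #↥(Set.range g) := topWeight_le hbasis
      _ ≤ #(Finset (↥Φ × ℚ × ℚ)) := Cardinal.mk_range_le
      _ = #(↥Φ × ℚ × ℚ) := by
          haveI : Infinite (↥Φ × ℚ × ℚ) := Prod.infinite_of_left
          exact Cardinal.mk_finset_of_infinite _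
      _ ≤ #↥Φ := by
          have hΦa : ℵ₀ ≤ #↥Φ := Cardinal.infinite_iff.mp hΦinf
          have hq : #(↥Φ × ℚ × ℚ) = #↥Φ * ℵ₀ := by
            simp [Cardinal.mk_prod]
          rw [hq, Cardinal.mul_eq_left hΦa hΦa Cardinal.aleph0_ne_zero]
  exact ⟨Φ, hΦicc, le_antisymm hupper hlower, hΦsep⟩
end

section
/- Let X be a compact Hausdorff space, Φ a dense subset of C(X, ℝ) in the supremum norm, and 𝒰 the countable collection of open intervals in ℝ with rational endpoints. Then the collection {φ⁻¹(U) : φ ∈ Φ, U ∈ 𝒰} is a base for the topology of X; consequently w(X) ≤ d(C(X, ℝ)). -/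
universe u

lemma basis_aux {X : Type u} [TopologicalSpace X]
    [CompactSpace X] [T2Space X] (Φ : Set C(X, ℝ)) (hΦ : Dense Φ) :
    TopologicalSpace.IsTopologicalBasis
      {V : Set X | ∃ φ ∈ Φ, ∃ a b : ℚ, V = φ ⁻¹' Set.Ioo (a : ℝ) (b : ℝ)} := by
  apply TopologicalSpace.isTopologicalBasis_of_isOpen_of_nhds
  · rintro V ⟨φ, -, a, b, rfl⟩
    exact isOpen_Ioo.preimage φ.continuous
  · intro x U hxU hU
    obtain ⟨f, hf0, hf1, -⟩ :=
      exists_continuous_zero_one_of_isClosed (X := X) (s := Uᶜ) (t := {x})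
        hU.isClosed_compl isClosed_singleton
        (Set.disjoint_left.2 fun y hy (hy' : y ∈ ({x} : Set X)) => hy (hy' ▸ hxU))
    obtain ⟨φ, hφΦ, hφf⟩ := hΦ.exists_dist_lt f (by norm_num : (0:ℝ) < 1/4)
    have key : ∀ y : X, |φ y - f y| < 1/4 := by
      intro y
      calc |φ y - f y| = dist (φ y) (f y) := by rw [Real.dist_eq]
        _ ≤ dist φ f := ContinuousMap.dist_apply_le_dist y
        _ < 1/4 := by rwa [dist_comm] at hφf
    refine ⟨φ ⁻¹' Set.Ioo ((1/2 : ℚ) : ℝ) ((2 : ℚ) : ℝ), ⟨φ, hφΦ, 1/2, 2, rfl⟩, ?_, ?_⟩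
    · have hx1 : f x = 1 := hf1 rfl
      have := key x
      rw [abs_lt, hx1] at this
      constructor <;> · push_cast; linarith [this.1, this.2]
    · intro y hy
      by_contra hyU
      have h0 : f y = 0 := hf0 hyU
      have := key y
      rw [abs_lt, h0] at this
      have h1 : ((1/2 : ℚ) : ℝ) < φ y := hy.1
      push_cast at h1
      linarith [this.2]

/-- If `Φ` is a sup-norm dense subset of `C(X, ℝ)` for a compact Hausdorff space `X`, then
the preimages under members of `Φ` of open intervals with rational endpoints form a base
for the topology of `X`; consequently `w(X) ≤ d(C(X, ℝ))`. -/
theorem basis_of_dense_subset_continuousMap {X : Type u} [TopologicalSpace X]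
    [CompactSpace X] [T2Space X] (Φ : Set C(X, ℝ)) (hΦ : Dense Φ) :
    TopologicalSpace.IsTopologicalBasis
      {V : Set X | ∃ φ ∈ Φ, ∃ a b : ℚ, V = φ ⁻¹' Set.Ioo (a : ℝ) (b : ℝ)} ∧
    topWeight X ≤ topDensity C(X, ℝ) := by
  refine ⟨basis_aux Φ hΦ, ?_⟩
  -- choose a dense set realizing the density
  have hne : {c | ∃ s : Set C(X, ℝ), Dense s ∧ Cardinal.mk s = c}.Nonempty :=
    ⟨Cardinal.mk (Set.univ : Set C(X, ℝ)), Set.univ, dense_univ, rfl⟩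
  obtain ⟨s, hs, hcard⟩ : topDensity C(X, ℝ) ∈
      {c | ∃ s : Set C(X, ℝ), Dense s ∧ Cardinal.mk s = c} := csInf_mem hne
  set B : Set (Set X) :=
    {V : Set X | ∃ φ ∈ s, ∃ a b : ℚ, V = φ ⁻¹' Set.Ioo (a : ℝ) (b : ℝ)} with hB
  have hW : topWeight X ≤ Cardinal.mk B := csInf_le' ⟨B, basis_aux s hs, rfl⟩
  have hsne : s.Nonempty := hs.nonempty
  rcases isEmpty_or_nonempty X with hX | hX
  · -- X empty: every basic set is ∅
    have hBsub : B ⊆ {∅} := by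
      rintro V ⟨φ, -, a, b, rfl⟩
      simp [Set.eq_empty_of_isEmpty]
    have h1 : Cardinal.mk B ≤ 1 := by
      calc Cardinal.mk B ≤ Cardinal.mk ({∅} : Set (Set X)) :=
            Cardinal.mk_le_mk_of_subset hBsub
        _ = 1 := Cardinal.mk_singleton _
    have h2 : (1 : Cardinal) ≤ Cardinal.mk s := by
      rw [Cardinal.one_le_iff_ne_zero]
      exact Cardinal.mk_ne_zero_iff.2 hsne.to_subtype
    exact hW.trans (h1.trans (h2.trans_eq hcard))
  · -- X nonempty: s is infinite
    have hCinf : Infinite C(X, ℝ) := by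
      obtain ⟨x⟩ := hX
      exact Infinite.of_injective (fun r : ℝ => ContinuousMap.const X r)
        (fun r r' h => by simpa using congrArg (fun f : C(X, ℝ) => f x) h)
    have hsinf : s.Infinite := by
      intro hfin
      have : s = Set.univ := hfin.isClosed.closure_eq ▸ hs.closure_eq
      exact Set.infinite_univ (this ▸ hfin)
    have hℵ : Cardinal.aleph0 ≤ Cardinal.mk s := Cardinal.infinite_iff.mp hsinf.to_subtype
    -- bound mk B by mk (s × ℚ × ℚ)
    have hsurj : B ⊆ Set.range (fun p : s × ULift.{u} ℚ × ULift.{u} ℚ =>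
        (p.1 : C(X, ℝ)) ⁻¹' Set.Ioo ((p.2.1.down : ℝ)) ((p.2.2.down : ℝ))) := by
      rintro V ⟨φ, hφ, a, b, rfl⟩
      exact ⟨⟨⟨φ, hφ⟩, ⟨a⟩, ⟨b⟩⟩, rfl⟩
    have hBcard : Cardinal.mk B ≤ Cardinal.mk s := by
      calc Cardinal.mk B
          ≤ Cardinal.mk (Set.range (fun p : s × ULift.{u} ℚ × ULift.{u} ℚ =>
              (p.1 : C(X, ℝ)) ⁻¹' Set.Ioo ((p.2.1.down : ℝ)) ((p.2.2.down : ℝ)))) :=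
            Cardinal.mk_le_mk_of_subset hsurj
        _ ≤ Cardinal.mk (s × ULift.{u} ℚ × ULift.{u} ℚ) := Cardinal.mk_range_le
        _ = Cardinal.mk s * (Cardinal.aleph0 * Cardinal.aleph0) := by
            simp [Cardinal.mk_prod, Cardinal.mk_eq_aleph0]
        _ = Cardinal.mk s := by
            rw [Cardinal.aleph0_mul_aleph0]
            exact Cardinal.mul_eq_left hℵ hℵ Cardinal.aleph0_ne_zero
    exact hW.trans (hBcard.trans_eq hcard)
end

section
/- Let X be a continuum, K a proper subcontinuum of X, and x₀ ∈ X \ K. Form the quotient Y of X × {0,1} identifying (x₀, 0) with (x₀, 1) (and making no other identifications). Then Y is a continuum, and the map f : Y → X induced by the first-coordinate projection is a continuous surjection whose preimage f⁻¹(K) is disconnected, having exactly two connected components, each mapped homeomorphically onto K by f. -/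
/-- The equivalence relation on `X × Bool` identifying `(x₀, false)` with `(x₀, true)`
and making no other (nontrivial) identifications. -/
def doubleSetoid (X : Type*) (x₀ : X) : Setoid (X × Bool) where
  r a b := a = b ∨ (a.1 = x₀ ∧ b.1 = x₀)
  iseqv := by
    refine ⟨fun a => Or.inl rfl, ?_, ?_⟩
    · rintro a b (rfl | ⟨h1, h2⟩)
      · exact Or.inl rfl
      · exact Or.inr ⟨h2, h1⟩
    · rintro a b c (rfl | ⟨h1, h2⟩) (rfl | ⟨h3, h4⟩)
      · exact Or.inl rfl
      · exact Or.inr ⟨h3, h4⟩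
      · exact Or.inr ⟨h1, h2⟩
      · exact Or.inr ⟨h1, h4⟩
section DoubleAux
variable {X : Type*} [TopologicalSpace X] (x₀ : X)

lemma doubleSetoid_mk_eq {a b : X × Bool}
    (h : Quotient.mk (doubleSetoid X x₀) a = Quotient.mk (doubleSetoid X x₀) b) :
    a = b ∨ (a.1 = x₀ ∧ b.1 = x₀) := Quotient.exact h

lemma doubleSetoid_quotientMap :
    Topology.IsQuotientMap (Quotient.mk (doubleSetoid X x₀)) := isQuotientMap_quot_mk

lemma doubleSetoid_compactSpace [CompactSpace X] :
    CompactSpace (Quotient (doubleSetoid X x₀)) := by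
  constructor
  rw [← (Quotient.mk_surjective).range_eq]
  exact isCompact_range (doubleSetoid_quotientMap x₀).continuous

/-- The map embedding the double into `X × X`. -/
def doubleEmbed : X × Bool → X × X :=
  fun p => if p.2 = true then (x₀, p.1) else (p.1, x₀)

lemma doubleEmbed_resp : ∀ a b : X × Bool, (doubleSetoid X x₀).r a b → doubleEmbed x₀ a = doubleEmbed x₀ b := by
  rintro ⟨a1, a2⟩ ⟨b1, b2⟩ (h | ⟨h1, h2⟩)
  · rw [h]
  · dsimp at h1 h2
    subst h1; subst h2
    cases a2 <;> cases b2 <;> rfl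

lemma doubleEmbed_continuous : Continuous (doubleEmbed x₀) := by
  apply Continuous.if
  · intro a ha
    have hcl : IsClopen {p : X × Bool | p.2 = true} :=
      (isClopen_discrete ({true} : Set Bool)).preimage continuous_snd
    rw [hcl.frontier_eq] at ha
    exact absurd ha (Set.notMem_empty a)
  · exact continuous_const.prodMk continuous_fst
  · exact continuous_fst.prodMk continuous_const

lemma doubleSetoid_t2Space [CompactSpace X] [T2Space X] :
    T2Space (Quotient (doubleSetoid X x₀)) := by
  haveI := doubleSetoid_compactSpace x₀
  have hgc : Continuous (Quotient.lift (doubleEmbed x₀) (doubleEmbed_resp x₀)) :=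
    (doubleEmbed_continuous x₀).quotient_lift (doubleEmbed_resp x₀)
  have hginj : Function.Injective (Quotient.lift (doubleEmbed x₀) (doubleEmbed_resp x₀)) := by
    intro y y'
    refine Quotient.inductionOn₂ y y' ?_
    rintro ⟨a1, a2⟩ ⟨b1, b2⟩ h
    apply Quotient.sound
    simp only [Quotient.lift_mk] at h
    cases a2 <;> cases b2 <;>
      simp only [doubleEmbed, if_true, if_false, Prod.mk.injEq, Bool.false_eq_true,
        reduceIte] at h
    · exact Or.inl (by rw [h.1])
    · exact Or.inr ⟨h.1, h.2.symm⟩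
    · exact Or.inr ⟨h.2, h.1.symm⟩
    · exact Or.inl (by rw [h.2])
  exact (hgc.isClosedEmbedding hginj).toIsEmbedding.t2Space

end DoubleAux
/-- Doubling a continuum `X` over a point `x₀ ∉ K` (for a proper subcontinuum `K`):
the quotient `Y` of `X × {0,1}` identifying `(x₀,0) ∼ (x₀,1)` is a continuum, the induced
first-coordinate map `f : Y → X` is a continuous surjection, and `f⁻¹(K)` is disconnected,
having exactly two connected components, each mapped homeomorphically onto `K` by `f`. -/
theorem double_of_continuum {X : Type*} [TopologicalSpace X]
    [CompactSpace X] [T2Space X] [ConnectedSpace X] [Nonempty X]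
    (K : Set X) (hKne : K.Nonempty) (hKcpt : IsCompact K) (hKconn : IsConnected K)
    (hKprop : K ≠ Set.univ) (x₀ : X) (hx₀ : x₀ ∉ K)
    (f : Quotient (doubleSetoid X x₀) → X)
    (hf : ∀ p : X × Bool, f (Quotient.mk (doubleSetoid X x₀) p) = p.1) :
    Nonempty (Quotient (doubleSetoid X x₀)) ∧
    CompactSpace (Quotient (doubleSetoid X x₀)) ∧
    T2Space (Quotient (doubleSetoid X x₀)) ∧
    ConnectedSpace (Quotient (doubleSetoid X x₀)) ∧
    Continuous f ∧ Function.Surjective f ∧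
    ¬ IsPreconnected (f ⁻¹' K) ∧
    ∃ C₁ C₂ : Set (Quotient (doubleSetoid X x₀)),
      C₁ ≠ C₂ ∧ C₁.Nonempty ∧ C₂.Nonempty ∧
      IsClosed C₁ ∧ IsClosed C₂ ∧ IsConnected C₁ ∧ IsConnected C₂ ∧
      Disjoint C₁ C₂ ∧ C₁ ∪ C₂ = f ⁻¹' K ∧
      (∀ y ∈ f ⁻¹' K, connectedComponentIn (f ⁻¹' K) y = C₁ ∨
        connectedComponentIn (f ⁻¹' K) y = C₂) ∧
      (∃ e : C₁ ≃ₜ K, ∀ p : C₁, (e p : X) = f p) ∧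
      (∃ e : C₂ ≃ₜ K, ∀ p : C₂, (e p : X) = f p) := by
  classical
  set q : X × Bool → Quotient (doubleSetoid X x₀) := Quotient.mk (doubleSetoid X x₀) with hqdef
  have hq : Topology.IsQuotientMap q := doubleSetoid_quotientMap x₀
  have hqc : Continuous q := hq.continuous
  have hqsurj : Function.Surjective q := Quotient.mk_surjective
  have hqeq : ∀ a b : X × Bool, q a = q b → (a = b ∨ (a.1 = x₀ ∧ b.1 = x₀)) :=
    fun a b h => doubleSetoid_mk_eq x₀ h
  have hfq : ∀ p : X × Bool, f (q p) = p.1 := hf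
  have hcf : Continuous f := by
    rw [hq.continuous_iff]
    have : f ∘ q = Prod.fst := funext hfq
    rw [this]; exact continuous_fst
  have hfsurj : Function.Surjective f := fun x => ⟨q (x, false), hfq _⟩
  have hne : Nonempty (Quotient (doubleSetoid X x₀)) := ⟨q (Classical.arbitrary X, false)⟩
  haveI hcpt : CompactSpace (Quotient (doubleSetoid X x₀)) := doubleSetoid_compactSpace x₀
  haveI hT2 : T2Space (Quotient (doubleSetoid X x₀)) := doubleSetoid_t2Space x₀
  -- connected
  have hconn : ConnectedSpace (Quotient (doubleSetoid X x₀)) := by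
    have h0 : IsPreconnected (Set.range fun x : X => q (x, false)) :=
      isPreconnected_range (hqc.comp (continuous_id.prodMk continuous_const))
    have h1 : IsPreconnected (Set.range fun x : X => q (x, true)) :=
      isPreconnected_range (hqc.comp (continuous_id.prodMk continuous_const))
    have hpt : q (x₀, false) = q (x₀, true) := Quotient.sound (Or.inr ⟨rfl, rfl⟩)
    have huniv : (Set.range fun x : X => q (x, false)) ∪ (Set.range fun x : X => q (x, true))
        = Set.univ := by
      ext y
      simp only [Set.mem_union, Set.mem_range, Set.mem_univ, iff_true]
      obtain ⟨⟨x, b⟩, rfl⟩ := hqsurj y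
      cases b
      · exact Or.inl ⟨x, rfl⟩
      · exact Or.inr ⟨x, rfl⟩
    have hpc : PreconnectedSpace (Quotient (doubleSetoid X x₀)) := by
      refine ⟨?_⟩
      rw [← huniv]
      exact IsPreconnected.union (q (x₀, false)) ⟨x₀, rfl⟩ ⟨x₀, hpt.symm⟩ h0 h1
    exact @ConnectedSpace.mk _ _ hpc hne
  -- the two pieces
  set C : Bool → Set (Quotient (doubleSetoid X x₀)) := fun b => (fun x => q (x, b)) '' K
    with hC
  have hCne : ∀ b, (C b).Nonempty := fun b => hKne.image _
  have hCcpt : ∀ b, IsCompact (C b) := fun b =>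
    hKcpt.image (hqc.comp (continuous_id.prodMk continuous_const))
  have hCcl : ∀ b, IsClosed (C b) := fun b => (hCcpt b).isClosed
  have hCconn : ∀ b, IsConnected (C b) := fun b =>
    hKconn.image _ ((hqc.comp (continuous_id.prodMk continuous_const)).continuousOn)
  have hdisj : Disjoint (C false) (C true) := by
    rw [Set.disjoint_left]
    rintro y ⟨k, hk, rfl⟩ ⟨k', hk', hk'eq⟩
    rcases hqeq _ _ hk'eq with h | ⟨h1, h2⟩
    · exact Bool.noConfusion (congrArg Prod.snd h)
    · exact hx₀ (h2 ▸ hk)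
  have hunion : C false ∪ C true = f ⁻¹' K := by
    ext y
    constructor
    · rintro (⟨k, hk, rfl⟩ | ⟨k, hk, rfl⟩) <;> simpa [Set.mem_preimage, hfq] using hk
    · intro hy
      obtain ⟨⟨x, b⟩, rfl⟩ := hqsurj y
      have hx : x ∈ K := by simpa [Set.mem_preimage, hfq] using hy
      cases b
      · exact Or.inl ⟨x, hx, rfl⟩
      · exact Or.inr ⟨x, hx, rfl⟩
  have hfinj : ∀ b : Bool, ∀ y ∈ C b, ∀ y' ∈ C b, f y = f y' → y = y' := by
    rintro b y ⟨k, hk, rfl⟩ y' ⟨k', hk', rfl⟩ h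
    rw [hfq, hfq] at h
    exact congrArg (fun x => q (x, b)) h
  have hnpc : ¬ IsPreconnected (f ⁻¹' K) := by
    rw [isPreconnected_closed_iff]
    push_neg
    refine ⟨C false, C true, hCcl false, hCcl true, hunion.ge, ?_, ?_, ?_⟩
    · obtain ⟨y, hy⟩ := hCne false
      exact ⟨y, hunion ▸ Or.inl hy, hy⟩
    · obtain ⟨y, hy⟩ := hCne true
      exact ⟨y, hunion ▸ Or.inr hy, hy⟩
    · rw [Set.disjoint_iff_inter_eq_empty] at hdisj
      rw [hdisj, Set.inter_empty]
  have hcomp : ∀ y ∈ f ⁻¹' K, connectedComponentIn (f ⁻¹' K) y = C false ∨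
      connectedComponentIn (f ⁻¹' K) y = C true := by
    intro y hy
    have hy' : y ∈ C false ∪ C true := hunion ▸ hy
    have hsub : connectedComponentIn (f ⁻¹' K) y ⊆ C false ∪ C true := by
      rw [hunion]; exact connectedComponentIn_subset _ _
    have hpre : IsPreconnected (connectedComponentIn (f ⁻¹' K) y) :=
      isPreconnected_connectedComponentIn
    have hmem := mem_connectedComponentIn hy
    have key : ∀ b : Bool, y ∈ C b → connectedComponentIn (f ⁻¹' K) y = C b := by
      intro b hyb
      apply Set.Subset.antisymm
      · by_contra hns
        obtain ⟨z, hz, hznb⟩ := Set.not_subset.mp hns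
        have hzother : z ∈ C (!b) := by
          rcases hsub hz with h | h
          · cases b
            · exact absurd h hznb
            · exact h
          · cases b
            · exact h
            · exact absurd h hznb
        have hsub' : connectedComponentIn (f ⁻¹' K) y ⊆ C b ∪ C (!b) := by
          intro w hw
          rcases hsub hw with h | h
          · cases b
            · exact Or.inl h
            · exact Or.inr h
          · cases b
            · exact Or.inr h
            · exact Or.inl h
        obtain ⟨w, _, hw1, hw2⟩ := (isPreconnected_closed_iff.mp hpre) (C b) (C (!b))
          (hCcl b) (hCcl (!b)) hsub' ⟨y, hmem, hyb⟩ ⟨z, hz, hzother⟩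
        cases b
        · exact (Set.disjoint_left.mp hdisj hw1) hw2
        · exact (Set.disjoint_left.mp hdisj hw2) hw1
      · refine (hCconn b).isPreconnected.subset_connectedComponentIn hyb ?_
        rw [← hunion]
        cases b
        · exact Set.subset_union_left
        · exact Set.subset_union_right
    rcases hy' with h | h
    · exact Or.inl (key false h)
    · exact Or.inr (key true h)
  have hhomeo : ∀ b : Bool, ∃ e : C b ≃ₜ K, ∀ p : C b, (e p : X) = f p := by
    intro b
    haveI : CompactSpace (C b) := isCompact_iff_compactSpace.mp (hCcpt b)
    have hmemK : ∀ p : C b, f (p : Quotient (doubleSetoid X x₀)) ∈ K := by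
      rintro ⟨y, k, hk, rfl⟩
      simpa [hfq] using hk
    have hφc : Continuous (fun p : C b => (⟨f p, hmemK p⟩ : K)) :=
      (hcf.comp continuous_subtype_val).subtype_mk _
    have hφbij : Function.Bijective (fun p : C b => (⟨f p, hmemK p⟩ : K)) := by
      constructor
      · rintro p p' h
        have : f (p : Quotient (doubleSetoid X x₀)) = f (p' : Quotient (doubleSetoid X x₀)) :=
          congrArg Subtype.val h
        exact Subtype.ext (hfinj b _ p.2 _ p'.2 this)
      · rintro ⟨k, hk⟩
        refine ⟨⟨q (k, b), ⟨k, hk, rfl⟩⟩, ?_⟩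
        exact Subtype.ext (hfq _)
    exact ⟨Continuous.homeoOfEquivCompactToT2 (f := Equiv.ofBijective _ hφbij) hφc,
      fun p => rfl⟩
  obtain ⟨e₁, he₁⟩ := hhomeo false
  obtain ⟨e₂, he₂⟩ := hhomeo true
  refine ⟨hne, hcpt, hT2, hconn, hcf, hfsurj, hnpc,
    C false, C true, ?_, hCne false, hCne true, hCcl false, hCcl true,
    hCconn false, hCconn true, hdisj, hunion, hcomp, ⟨e₁, he₁⟩, ⟨e₂, he₂⟩⟩
  intro h
  obtain ⟨y, hy⟩ := hCne false
  exact (Set.disjoint_left.mp hdisj hy) (h ▸ hy)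
end

section
/- Let A be a normal bounded distributive lattice: whenever a ⊓ b = ⊥ there exist a', b' ∈ A with a ⊓ a' = ⊥, b ⊓ b' = ⊥, and a' ⊔ b' = ⊤. Then every prime filter of A is contained in a unique maximal proper filter of A. -/
/-- A proper filter of a bounded lattice: a nonempty, upward-closed subset, closed under
finite meets, not containing `⊥`. -/
def IsProperFilter {A : Type*} [DistribLattice A] [BoundedOrder A] (F : Set A) : Prop :=
  F.Nonempty ∧ (∀ a ∈ F, ∀ b, a ≤ b → b ∈ F) ∧ (∀ a ∈ F, ∀ b ∈ F, a ⊓ b ∈ F) ∧ ⊥ ∉ F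

/-- A maximal (proper) filter. -/
def IsMaximalFilter {A : Type*} [DistribLattice A] [BoundedOrder A] (F : Set A) : Prop :=
  IsProperFilter F ∧ ∀ G : Set A, IsProperFilter G → F ⊆ G → G = F

/-- A prime filter: a proper filter such that `a ⊔ b ∈ F` implies `a ∈ F` or `b ∈ F`. -/
def IsPrimeFilter {A : Type*} [DistribLattice A] [BoundedOrder A] (F : Set A) : Prop :=
  IsProperFilter F ∧ ∀ a b : A, a ⊔ b ∈ F → a ∈ F ∨ b ∈ F

/-- Maximality criterion: if `x ∉ M` with `M` maximal, there is `y ∈ M` with `x ⊓ y = ⊥`. -/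
lemma maximal_filter_criterion {A : Type*} [DistribLattice A] [BoundedOrder A]
    {M : Set A} (hM : IsMaximalFilter M) {x : A} (hx : x ∉ M) :
    ∃ y ∈ M, x ⊓ y = ⊥ := by
  obtain ⟨⟨hne, hup, hmeet, hbot⟩, hmax⟩ := hM
  by_contra h
  push_neg at h
  -- consider the filter generated by M and x
  set G : Set A := {z | ∃ m ∈ M, x ⊓ m ≤ z} with hG
  have hMG : M ⊆ G := fun m hm => ⟨m, hm, inf_le_right⟩
  have hGproper : IsProperFilter G := by
    refine ⟨hne.mono hMG, ?_, ?_, ?_⟩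
    · rintro a ⟨m, hm, hle⟩ b hab; exact ⟨m, hm, hle.trans hab⟩
    · rintro a ⟨m, hm, hle⟩ b ⟨m', hm', hle'⟩
      refine ⟨m ⊓ m', hmeet m hm m' hm', ?_⟩
      have : x ⊓ (m ⊓ m') ≤ (x ⊓ m) ⊓ (x ⊓ m') :=
        le_inf (inf_le_inf_left x inf_le_left) (inf_le_inf_left x inf_le_right)
      exact this.trans (inf_le_inf hle hle')
    · rintro ⟨m, hm, hle⟩
      exact h m hm (le_bot_iff.mp hle)
  have := hmax G hGproper hMG
  apply hx
  rw [← this]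
  obtain ⟨m, hm⟩ := hne
  exact ⟨m, hm, inf_le_left⟩

/-- In a normal bounded distributive lattice, every prime filter is contained in a unique
maximal proper filter. -/
theorem prime_filter_subset_unique_maximal {A : Type*} [DistribLattice A] [BoundedOrder A]
    (hnorm : ∀ a b : A, a ⊓ b = ⊥ →
      ∃ a' b' : A, a ⊓ a' = ⊥ ∧ b ⊓ b' = ⊥ ∧ a' ⊔ b' = ⊤)
    (P : Set A) (hP : IsPrimeFilter P) :
    ∃! M : Set A, IsMaximalFilter M ∧ P ⊆ M := by
  obtain ⟨hPproper, hPprime⟩ := hP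
  obtain ⟨hPne, hPup, hPmeet, hPbot⟩ := hPproper
  -- ⊤ ∈ P
  obtain ⟨p, hp⟩ := hPne
  have htop : (⊤ : A) ∈ P := hPup p hp ⊤ le_top
  -- existence by Zorn
  have hz := zorn_subset_nonempty {G : Set A | IsProperFilter G} ?_ P
    ⟨⟨p, hp⟩, hPup, hPmeet, hPbot⟩
  · obtain ⟨M, hPM, hMmem, hMmax⟩ := hz
    have hMmaximal : IsMaximalFilter M := by
      refine ⟨hMmem, fun G hG hMG => ?_⟩
      exact (hMmax hG hMG).antisymm hMG
    refine ⟨M, ⟨hMmaximal, hPM⟩, ?_⟩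
    -- uniqueness
    rintro N ⟨hNmax, hPN⟩
    by_contra hne
    by_cases hNM : N ⊆ M
    · exact hne (hNmax.2 M hMmaximal.1 hNM).symm
    obtain ⟨a, haN, haM⟩ := Set.not_subset.mp hNM
    obtain ⟨b, hbM, hab⟩ := maximal_filter_criterion hMmaximal haM
    obtain ⟨a', b', ha', hb', hsup⟩ := hnorm a b hab
    rcases hPprime a' b' (hsup ▸ htop) with h | h
    · exact hNmax.1.2.2.2 (ha' ▸ hNmax.1.2.2.1 a haN a' (hPN h))
    · exact hMmaximal.1.2.2.2 (hb' ▸ hMmaximal.1.2.2.1 b hbM b' (hPM h))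
  · -- chains have upper bounds
    intro c hcS hchain hcne
    refine ⟨⋃₀ c, ?_, fun s hs => Set.subset_sUnion_of_mem hs⟩
    obtain ⟨F, hF⟩ := hcne
    obtain ⟨⟨f, hf⟩, _, _, _⟩ := hcS hF
    refine ⟨⟨f, F, hF, hf⟩, ?_, ?_, ?_⟩
    · rintro x ⟨G, hG, hxG⟩ y hxy
      exact ⟨G, hG, (hcS hG).2.1 x hxG y hxy⟩
    · rintro x ⟨G, hG, hxG⟩ y ⟨H, hH, hyH⟩
      rcases hchain.total hG hH with h | h
      · exact ⟨H, hH, (hcS hH).2.2.1 x (h hxG) y hyH⟩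
      · exact ⟨G, hG, (hcS hG).2.2.1 x hxG y (h hyH)⟩
    · rintro ⟨G, hG, hbG⟩
      exact (hcS hG).2.2.2 hbG
end

section
/- Let A be a normal bounded distributive lattice (whenever a ⊓ b = ⊥ there exist a', b' with a ⊓ a' = ⊥, b ⊓ b' = ⊥, a' ⊔ b' = ⊤). Then the maximal spectrum S(A), the space of maximal proper filters of A with the sets a^♯ = {m : a ∈ m} as a base of closed sets, is a Hausdorff topological space. -/
/-- The maximal spectrum: the set of maximal proper filters of `A`. -/
def MaxSpectrum (A : Type*) [DistribLattice A] [BoundedOrder A] :=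
  {F : Set A // IsMaximalFilter F}

/-- The topology on `S(A)` with the sets `a^♯ = {m : a ∈ m}` as a base of closed sets. -/
instance MaxSpectrum.topologicalSpace (A : Type*) [DistribLattice A] [BoundedOrder A] :
    TopologicalSpace (MaxSpectrum A) :=
  TopologicalSpace.generateFrom {U | ∃ a : A, U = {m : MaxSpectrum A | a ∉ m.1}}

/-- If `F` is maximal and `a ∉ F`, there is `b ∈ F` with `a ⊓ b = ⊥`. -/
lemma maximal_compl {A : Type*} [DistribLattice A] [BoundedOrder A] {F : Set A}
    (hF : IsMaximalFilter F) {a : A} (ha : a ∉ F) : ∃ b ∈ F, a ⊓ b = ⊥ := by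
  obtain ⟨⟨hne, hup, hmeet, hbot⟩, hmax⟩ := hF
  by_contra h
  push_neg at h
  set G : Set A := {x | ∃ b ∈ F, a ⊓ b ≤ x} with hG
  have hFG : F ⊆ G := fun c hc => ⟨c, hc, inf_le_right⟩
  have hGproper : IsProperFilter G := by
    refine ⟨⟨a, hne.choose, hne.choose_spec, inf_le_left⟩, ?_, ?_, ?_⟩
    · rintro x ⟨b, hb, hx⟩ y hxy; exact ⟨b, hb, hx.trans hxy⟩
    · rintro x ⟨b, hb, hx⟩ y ⟨c, hc, hy⟩
      exact ⟨b ⊓ c, hmeet b hb c hc, le_inf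
        (le_trans (inf_le_inf_left a inf_le_left) hx)
        (le_trans (inf_le_inf_left a inf_le_right) hy)⟩
    · rintro ⟨b, hb, hble⟩
      exact h b hb (le_bot_iff.mp hble)
  have : G = F := hmax G hGproper hFG
  exact ha (this ▸ ⟨hne.choose, hne.choose_spec, inf_le_left⟩)

/-- Maximal filters are prime. -/
lemma maximal_prime {A : Type*} [DistribLattice A] [BoundedOrder A] {F : Set A}
    (hF : IsMaximalFilter F) {a b : A} (hab : a ⊔ b ∈ F) : a ∈ F ∨ b ∈ F := by
  by_contra h
  push_neg at h
  obtain ⟨c, hc, hac⟩ := maximal_compl hF h.1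
  obtain ⟨d, hd, hbd⟩ := maximal_compl hF h.2
  obtain ⟨⟨_, hup, hmeet, hbot⟩, _⟩ := hF
  have hmem : (a ⊔ b) ⊓ (c ⊓ d) ∈ F := hmeet _ hab _ (hmeet c hc d hd)
  have : (a ⊔ b) ⊓ (c ⊓ d) = ⊥ := by
    rw [inf_sup_right]
    have h1 : a ⊓ (c ⊓ d) ≤ ⊥ := by
      calc a ⊓ (c ⊓ d) ≤ a ⊓ c := inf_le_inf_left a inf_le_left
        _ = ⊥ := hac
    have h2 : b ⊓ (c ⊓ d) ≤ ⊥ := by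
      calc b ⊓ (c ⊓ d) ≤ b ⊓ d := inf_le_inf_left b inf_le_right
        _ = ⊥ := hbd
    exact le_bot_iff.mp (sup_le h1 h2)
  exact hbot (this ▸ hmem)

/-- The maximal spectrum of a normal bounded distributive lattice is Hausdorff. -/
theorem MaxSpectrum.t2Space (A : Type*) [DistribLattice A] [BoundedOrder A]
    (hnorm : ∀ a b : A, a ⊓ b = ⊥ →
      ∃ a' b' : A, a ⊓ a' = ⊥ ∧ b ⊓ b' = ⊥ ∧ a' ⊔ b' = ⊤) :
    T2Space (MaxSpectrum A) := by
  constructor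
  intro m n hmn
  -- find a ∈ m.1 with a ∉ n.1
  have hsub : ¬ m.1 ⊆ n.1 := by
    intro hs
    exact hmn (Subtype.ext (m.2.2 n.1 n.2.1 hs).symm)
  obtain ⟨a, ham, han⟩ := Set.not_subset.mp hsub
  obtain ⟨b, hbn, hab⟩ := maximal_compl n.2 han
  obtain ⟨a', b', haa', hbb', htop⟩ := hnorm a b hab
  refine ⟨{p : MaxSpectrum A | a' ∉ p.1}, {p : MaxSpectrum A | b' ∉ p.1},
    TopologicalSpace.GenerateOpen.basic _ ⟨a', rfl⟩,
    TopologicalSpace.GenerateOpen.basic _ ⟨b', rfl⟩, ?_, ?_, ?_⟩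
  · intro ha'
    obtain ⟨⟨_, _, hmeet, hbot⟩, _⟩ := m.2
    exact hbot (haa' ▸ hmeet a ham a' ha')
  · intro hb'
    obtain ⟨⟨_, _, hmeet, hbot⟩, _⟩ := n.2
    exact hbot (hbb' ▸ hmeet b hbn b' hb')
  · rw [Set.disjoint_left]
    rintro p hp1 hp2
    obtain ⟨⟨⟨x, hx⟩, hup, _, _⟩, _⟩ := p.2
    have htopmem : a' ⊔ b' ∈ p.1 := htop ▸ hup x hx ⊤ le_top
    rcases maximal_prime p.2 htopmem with h | h
    · exact hp1 h
    · exact hp2 h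
end

section
/- Let A be a disjunctive bounded lattice: for any two distinct elements a, b ∈ A there exists c ≠ ⊥ such that either (c ≤ a and c ⊓ b = ⊥) or (c ≤ b and c ⊓ a = ⊥). Then the map a ↦ a^♯ := {m ∈ S(A) : a ∈ m} from A to subsets of the maximal spectrum S(A) is injective. -/
lemma exists_maximal_filter {A : Type*} [DistribLattice A] [BoundedOrder A]
    {c : A} (hc : c ≠ ⊥) : ∃ M : Set A, IsMaximalFilter M ∧ c ∈ M := by
  set S : Set (Set A) := {F | IsProperFilter F}
  have hP : ({x : A | c ≤ x} : Set A) ∈ S := by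
    refine ⟨⟨c, le_refl c⟩, fun a ha b hab => ha.trans hab,
      fun a ha b hb => le_inf ha hb, fun h => hc (le_bot_iff.mp h)⟩
  have hchainub : ∀ C ⊆ S, IsChain (· ⊆ ·) C → C.Nonempty →
      ∃ ub ∈ S, ∀ s ∈ C, s ⊆ ub := by
    intro C hCS hchain hCne
    refine ⟨⋃₀ C, ?_, fun s hs => Set.subset_sUnion_of_mem hs⟩
    obtain ⟨F0, hF0⟩ := hCne
    obtain ⟨x, hx⟩ := (hCS hF0).1
    refine ⟨⟨x, Set.mem_sUnion_of_mem hx hF0⟩, ?_, ?_, ?_⟩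
    · rintro a ⟨F, hF, haF⟩ b hab
      exact Set.mem_sUnion_of_mem ((hCS hF).2.1 a haF b hab) hF
    · rintro a ⟨F, hF, haF⟩ b ⟨G, hG, hbG⟩
      rcases hchain.total hF hG with h | h
      · exact Set.mem_sUnion_of_mem ((hCS hG).2.2.1 a (h haF) b hbG) hG
      · exact Set.mem_sUnion_of_mem ((hCS hF).2.2.1 a haF b (h hbG)) hF
    · rintro ⟨F, hF, hbot⟩
      exact (hCS hF).2.2.2 hbot
  obtain ⟨M, hM, hMmax⟩ := zorn_subset_nonempty S hchainub _ hP
  exact ⟨M, ⟨hMmax.prop, fun G hG hMG => subset_antisymm (hMmax.le_of_ge hG hMG) hMG⟩,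
    hM (le_refl c)⟩

/-- For a disjunctive bounded distributive lattice, the map `a ↦ a^♯` into subsets of the
maximal spectrum is injective. -/
theorem sharp_injective {A : Type*} [DistribLattice A] [BoundedOrder A]
    (hdisj : ∀ a b : A, a ≠ b → ∃ c : A, c ≠ ⊥ ∧
      ((c ≤ a ∧ c ⊓ b = ⊥) ∨ (c ≤ b ∧ c ⊓ a = ⊥))) :
    Function.Injective (fun a : A => {m : MaxSpectrum A | a ∈ m.1}) := by
  intro a b hab
  by_contra hne
  obtain ⟨c, hc, h⟩ := hdisj a b hne
  obtain ⟨M, hM, hcM⟩ := exists_maximal_filter hc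
  have hsets : (a ∈ M) ↔ (b ∈ M) := by
    have := congrFun hab
    constructor <;> intro h'
    · exact (Set.ext_iff.mp hab ⟨M, hM⟩).mp h'
    · exact (Set.ext_iff.mp hab ⟨M, hM⟩).mpr h'
  rcases h with ⟨hca, hcb⟩ | ⟨hcb, hca⟩
  · have haM : a ∈ M := hM.1.2.1 c hcM a hca
    have hbM : b ∈ M := hsets.mp haM
    exact hM.1.2.2.2 (hcb ▸ hM.1.2.2.1 c hcM b hbM)
  · have hbM : b ∈ M := hM.1.2.1 c hcM b hcb
    have haM : a ∈ M := hsets.mpr hbM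
    exact hM.1.2.2.2 (hca ▸ hM.1.2.2.1 c hcM a haM)
end

section
/- Let f : X → Y be a monotone continuous surjection between compact Hausdorff spaces (i.e., f⁻¹({y}) is connected for every y ∈ Y). Then for every connected subset C of Y that is closed, the preimage f⁻¹(C) is connected. -/
/-- For a monotone continuous surjection between compact Hausdorff spaces, the preimage of
a closed connected set is connected. -/
theorem monotone_preimage_connected {X Y : Type*} [TopologicalSpace X] [TopologicalSpace Y]
    [CompactSpace X] [T2Space X] [CompactSpace Y] [T2Space Y]
    (f : X → Y) (hf : Continuous f) (hsurj : Function.Surjective f)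
    (hmono : ∀ y : Y, IsConnected (f ⁻¹' {y}))
    (C : Set Y) (hCcl : IsClosed C) (hCconn : IsConnected C) :
    IsConnected (f ⁻¹' C) := by
  obtain ⟨⟨y0, hy0⟩, hCpre⟩ := hCconn
  refine ⟨?_, ?_⟩
  · obtain ⟨x0, hx0⟩ := hsurj y0
    exact ⟨x0, by simpa [hx0] using hy0⟩
  rw [isPreconnected_closed_iff]
  intro t t' ht ht' hcover hnt hnt'
  by_contra hemp
  push_neg at hemp
  -- each fiber over y ∈ C lies entirely in t or t'
  have hfiber : ∀ y ∈ C, f ⁻¹' {y} ⊆ t ∨ f ⁻¹' {y} ⊆ t' := by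
    intro y hy
    by_contra h
    push_neg at h
    obtain ⟨h1, h2⟩ := h
    obtain ⟨a, ha, hat'⟩ := Set.not_subset.1 h2
    obtain ⟨b, hb, hbt⟩ := Set.not_subset.1 h1
    have hsub : f ⁻¹' {y} ⊆ f ⁻¹' C := fun x hx => by
      simp only [Set.mem_preimage, Set.mem_singleton_iff] at hx; simp [hx, hy]
    have := (isPreconnected_closed_iff.1 (hmono y).isPreconnected) t t' ht ht'
      (hsub.trans hcover) ⟨a, ha, (hcover (hsub ha)).resolve_right hat'⟩
      ⟨b, hb, (hcover (hsub hb)).resolve_left hbt⟩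
    obtain ⟨c, hc, hct, hct'⟩ := this
    exact absurd hemp (Set.nonempty_iff_ne_empty.1 ⟨c, Set.mem_inter (hsub hc) (Set.mem_inter hct hct')⟩)
  -- images of the two closed pieces
  set A := f ⁻¹' C ∩ t with hA
  set B := f ⁻¹' C ∩ t' with hB
  have hAcl : IsClosed A := (hCcl.preimage hf).inter ht
  have hBcl : IsClosed B := (hCcl.preimage hf).inter ht'
  have hfAcl : IsClosed (f '' A) := (hAcl.isCompact.image hf).isClosed
  have hfBcl : IsClosed (f '' B) := (hBcl.isCompact.image hf).isClosed
  have hCcov : C ⊆ f '' A ∪ f '' B := by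
    intro y hy
    obtain ⟨x, hx⟩ := hsurj y
    have hxC : x ∈ f ⁻¹' C := by simp [hx, hy]
    rcases hcover hxC with h | h
    · exact Or.inl ⟨x, ⟨hxC, h⟩, hx⟩
    · exact Or.inr ⟨x, ⟨hxC, h⟩, hx⟩
  obtain ⟨xa, hxa⟩ := hnt
  obtain ⟨xb, hxb⟩ := hnt'
  have := (isPreconnected_closed_iff.1 hCpre) (f '' A) (f '' B) hfAcl hfBcl hCcov
    ⟨f xa, Set.mem_inter hxa.1 (Set.mem_image_of_mem f hxa)⟩
    ⟨f xb, Set.mem_inter hxb.1 (Set.mem_image_of_mem f hxb)⟩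
  obtain ⟨y, hyC, ⟨a, ha, hay⟩, ⟨b, hb, hby⟩⟩ := this
  rcases hfiber y hyC with h | h
  · have : b ∈ f ⁻¹' {y} := by simp [hby]
    exact absurd hemp (Set.nonempty_iff_ne_empty.1 ⟨b, Set.mem_inter hb.1 (Set.mem_inter (h this) hb.2)⟩)
  · have : a ∈ f ⁻¹' {y} := by simp [hay]
    exact absurd hemp (Set.nonempty_iff_ne_empty.1 ⟨a, Set.mem_inter ha.1 (Set.mem_inter ha.2 (h this))⟩)
end

section
/- Let Y be a compact Hausdorff space and n a natural number. Suppose that whenever B₁, …, B_{n+2} are closed subsets of Y with empty intersection, there exist closed sets F₁, …, F_{n+2} with F_m ⊇ B_m for each m, ⋂ F_m = ∅, and ⋃ F_m = Y. Then the same conclusion holds for any finite family of closed sets B₁, …, B_k with k ≥ n+2 and empty intersection: there are closed F₁, …, F_k covering Y with F_m ⊇ B_m and ⋂ F_m = ∅. -/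
/-- Hemmingsen's characterization of covering dimension `≤ n`, extended from families of
exactly `n + 2` closed sets to arbitrary finite families of at least `n + 2` closed sets. -/
theorem hemmingsen_extension {Y : Type*} [TopologicalSpace Y] [CompactSpace Y] [T2Space Y]
    (n : ℕ)
    (hdim : ∀ B : Fin (n + 2) → Set Y, (∀ m, IsClosed (B m)) → (⋂ m, B m) = ∅ →
      ∃ F : Fin (n + 2) → Set Y, (∀ m, IsClosed (F m)) ∧ (∀ m, B m ⊆ F m) ∧
        (⋂ m, F m) = ∅ ∧ (⋃ m, F m) = Set.univ) :
    ∀ k : ℕ, n + 2 ≤ k → ∀ B : Fin k → Set Y, (∀ m, IsClosed (B m)) → (⋂ m, B m) = ∅ →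
      ∃ F : Fin k → Set Y, (∀ m, IsClosed (F m)) ∧ (∀ m, B m ⊆ F m) ∧
        (⋂ m, F m) = ∅ ∧ (⋃ m, F m) = Set.univ := by
  intro k hk
  induction k, hk using Nat.le_induction with
  | base => exact hdim
  | succ k hk IH =>
    intro B hBc hBi
    have hk0 : 0 < k := by omega
    set C : Fin k → Set Y := fun i =>
      if i.val + 1 = k then B i.castSucc ∩ B (Fin.last k) else B i.castSucc with hC
    have hCc : ∀ i, IsClosed (C i) := by
      intro i; simp only [hC]
      split
      · exact (hBc _).inter (hBc _)
      · exact hBc _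
    have hCi : (⋂ i, C i) = ∅ := by
      rw [Set.eq_empty_iff_forall_notMem]
      intro x hx
      rw [Set.eq_empty_iff_forall_notMem] at hBi
      apply hBi x
      rw [Set.mem_iInter] at hx ⊢
      intro j
      by_cases hj : j.val < k
      · have h := hx ⟨j.val, hj⟩
        have hcast : (Fin.castSucc ⟨j.val, hj⟩ : Fin (k+1)) = j := by ext; simp
        simp only [hC] at h
        split at h
        · rw [hcast] at h; exact h.1
        · rw [hcast] at h; exact h
      · have hjk : j = Fin.last k := by
          ext; simp only [Fin.val_last]; omega
        have h := hx ⟨k - 1, by omega⟩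
        simp only [hC] at h
        rw [if_pos (show k - 1 + 1 = k by omega)] at h
        rw [hjk]; exact h.2
    obtain ⟨G, hGc, hGsub, hGi, hGu⟩ := IH C hCc hCi
    refine ⟨fun j => if h : j.val + 1 < k then G ⟨j.val, by omega⟩
      else G ⟨k - 1, by omega⟩ ∪ B j, ?_, ?_, ?_, ?_⟩
    · intro j; dsimp only; split
      · exact hGc _
      · exact (hGc _).union (hBc _)
    · intro j; dsimp only; split
      · rename_i h
        have h2 := hGsub ⟨j.val, by omega⟩
        simp only [hC] at h2
        rw [if_neg (show ¬ (j.val + 1 = k) by omega)] at h2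
        have hcast : (Fin.castSucc (⟨j.val, by omega⟩ : Fin k)) = j := by ext; simp
        rw [hcast] at h2; exact h2
      · exact Set.subset_union_right
    · rw [Set.eq_empty_iff_forall_notMem]
      intro x hx
      rw [Set.eq_empty_iff_forall_notMem] at hGi
      apply hGi x
      rw [Set.mem_iInter] at hx ⊢
      intro i
      by_cases hi : i.val + 1 < k
      · have h := hx ⟨i.val, by omega⟩
        rw [dif_pos hi] at h
        exact h
      · have hieq : i = ⟨k - 1, by omega⟩ := by ext; show i.val = k - 1; omega
        have h1 := hx ⟨k - 1, by omega⟩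
        have h2 := hx (Fin.last k)
        rw [dif_neg (show ¬ (k - 1 + 1 < k) by omega)] at h1
        rw [dif_neg (show ¬ ((Fin.last k).val + 1 < k) by simp)] at h2
        rw [hieq]
        rcases h1 with h1 | h1
        · exact h1
        · rcases h2 with h2 | h2
          · exact h2
          · apply hGsub ⟨k - 1, by omega⟩
            simp only [hC]
            rw [if_pos (show k - 1 + 1 = k by omega)]
            refine ⟨?_, h2⟩
            have hcast : (Fin.castSucc (⟨k - 1, by omega⟩ : Fin k)) = (⟨k - 1, by omega⟩ : Fin (k+1)) := by
              ext; simp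
            rw [hcast]; exact h1
    · rw [Set.eq_univ_iff_forall]
      intro x
      have hx : x ∈ ⋃ i, G i := by rw [hGu]; trivial
      rw [Set.mem_iUnion] at hx ⊢
      obtain ⟨i, hi⟩ := hx
      by_cases h : i.val + 1 < k
      · refine ⟨⟨i.val, by omega⟩, ?_⟩
        rw [dif_pos h]
        exact hi
      · refine ⟨⟨k - 1, by omega⟩, ?_⟩
        rw [dif_neg (show ¬ (k - 1 + 1 < k) by omega)]
        left
        have hieq : i = ⟨k - 1, by omega⟩ := by ext; show i.val = k - 1; omega
        rw [← hieq]; exact hi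
end
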